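/- Let g, h : V → ℤ satisfy g(i)·h(i) ≥ 0 for all i ∈ V and g(i)·h(j) ≤ 0 for all i ≠ j in V. Then z^{γᵀg} * z^{γᵀh} = z^{γᵀ(g+h)} in A. (Consequently, for the ℤE-grading of the Weyl algebra, the product of the homogeneous components of degrees γᵀg and γᵀh equals the homogeneous component of degree γᵀ(g+h).) -/

import Mathlib

set_option linter.unusedSectionVars false

open MvPolynomial

variable {K : Type*} [Field K] {E : Type*} [Fintype E] [DecidableEq E]

noncomputable def Wx (K : Type*) [Field K] {E : Type*} (e : E) :
    Module.End K (MvPolynomial E K) :=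
  LinearMap.mulLeft K (X e)

noncomputable def Wy (K : Type*) [Field K] {E : Type*} (e : E) :
    Module.End K (MvPolynomial E K) :=
  (pderiv e).toLinearMap

noncomputable def Wu (K : Type*) [Field K] {E : Type*} (e : E) :
    Module.End K (MvPolynomial E K) :=
  Wy K e * Wx K e

lemma pderiv_pderiv_comm (a b : E) (p : MvPolynomial E K) :
    pderiv a (pderiv b p) = pderiv b (pderiv a p) := by
  induction p using MvPolynomial.induction_on with
  | C c => simp
  | add p q hp hq => simp [hp, hq]
  | mul_X p i hp =>
      by_cases hai : a = i
      · subst hai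
        by_cases hbi : b = a
        · subst hbi; rfl
        · simp [pderiv_mul, pderiv_X_of_ne (Ne.symm hbi), hp]; ring
      · by_cases hbi : b = i
        · subst hbi
          simp [pderiv_mul, pderiv_X_of_ne (Ne.symm hai), hp]; ring
        · simp [pderiv_mul, pderiv_X_of_ne (Ne.symm hai), pderiv_X_of_ne (Ne.symm hbi), hp]

lemma commute_Wx_Wx (a b : E) : Commute (Wx K a) (Wx K b) := by
  show _ = _
  apply LinearMap.ext; intro p
  simp [Wx, Module.End.mul_apply, mul_left_comm]

lemma commute_Wy_Wy (a b : E) : Commute (Wy K a) (Wy K b) := by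
  show _ = _
  apply LinearMap.ext; intro p
  simpa [Wy, Module.End.mul_apply] using pderiv_pderiv_comm (K := K) a b p

lemma commute_Wy_Wx {a b : E} (h : a ≠ b) : Commute (Wy K a) (Wx K b) := by
  show _ = _
  apply LinearMap.ext; intro p
  simp [Wy, Wx, Module.End.mul_apply, pderiv_mul, pderiv_X_of_ne (Ne.symm h)]

/-- `z_e^{(p)}` -/
noncomputable def Wz (K : Type*) [Field K] {E : Type*} (e : E) (p : ℤ) :
    Module.End K (MvPolynomial E K) :=
  if 0 ≤ p then Wx K e ^ p.toNat else Wy K e ^ (-p).toNat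

lemma commute_Wz {a b : E} (h : a ≠ b) (p q : ℤ) :
    Commute (Wz K a p) (Wz K b q) := by
  unfold Wz
  split_ifs <;>
    exact Commute.pow_pow (by
      first
        | exact commute_Wx_Wx a b
        | exact commute_Wy_Wy a b
        | exact commute_Wy_Wx h
        | exact (commute_Wy_Wx h.symm).symm) _ _

/-- `z^k` for `k : E → ℤ` -/
noncomputable def Zpow (K : Type*) [Field K] {E : Type*} [Fintype E] [DecidableEq E]
    (k : E → ℤ) : Module.End K (MvPolynomial E K) :=
  Finset.univ.noncommProd (fun e => Wz K e (k e))
    (fun a _ b _ hab => commute_Wz hab _ _)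

lemma commute_aeval_aeval {A : Type*} [Ring A] [Algebra K A] {a b : A} (h : Commute a b)
    (p q : Polynomial K) : Commute (Polynomial.aeval a p) (Polynomial.aeval b q) := by
  rw [Polynomial.aeval_eq_sum_range, Polynomial.aeval_eq_sum_range]
  apply Commute.sum_left
  intro i _
  apply Commute.sum_right
  intro j _
  exact ((h.pow_pow i j).smul_left _).smul_right _

lemma commute_Wu (a b : E) : Commute (Wu K a) (Wu K b) := by
  rcases eq_or_ne a b with rfl | h
  · rfl
  · exact Commute.mul_left
      ((commute_Wy_Wy a b).mul_right (commute_Wy_Wx h))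
      (((commute_Wy_Wx h.symm).symm).mul_right (commute_Wx_Wx a b))

/-- The defining property of the incidence matrix of a multiquiver: every row has
at most one positive and at most one negative entry. -/
def CondM {V E : Type*} (γ : E → V → ℤ) : Prop :=
  ∀ e : E, (∀ v w : V, 0 < γ e v → 0 < γ e w → v = w) ∧
    (∀ v w : V, γ e v < 0 → γ e w < 0 → v = w)


/-! Along each edge `e` the exponents `(γᵀg) e` and `(γᵀh) e` have the same sign: the row `γ e`
has at most one positive and one negative entry, and the sign conditions on `g, h` make every
cross term of their product nonnegative. For exponents of the same sign, `z_e^{(a)}` and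
`z_e^{(b)}` are powers of the same generator, so `z_e^{(a)} z_e^{(b)} = z_e^{(a+b)}`, and the
factors for distinct edges commute. -/

lemma CondM.mul_nonpos {ι V : Type*} {γ : ι → V → ℤ} (hM : CondM γ) (e : ι) {v w : V}
    (hvw : v ≠ w) : γ e v * γ e w ≤ 0 := by
  by_contra! hpos
  rcases mul_pos_iff.mp hpos with ⟨hv, hw⟩ | ⟨hv, hw⟩
  · exact hvw ((hM e).1 v w hv hw)
  · exact hvw ((hM e).2 v w hv hw)

lemma sum_mul_mul_sum_mul_nonneg {R V : Type*} [CommRing R] [LinearOrder R]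
    [IsStrictOrderedRing R] [Fintype V] {c g h : V → R}
    (hc : ∀ v w, v ≠ w → c v * c w ≤ 0) (hgh : ∀ v, 0 ≤ g v * h v)
    (hgh' : ∀ v w, v ≠ w → g v * h w ≤ 0) :
    0 ≤ (∑ v, c v * g v) * (∑ v, c v * h v) := by
  rw [Finset.sum_mul_sum]
  refine Finset.sum_nonneg fun v _ => Finset.sum_nonneg fun w _ => ?_
  rw [mul_mul_mul_comm]
  rcases eq_or_ne v w with rfl | hvw
  · exact mul_nonneg (mul_self_nonneg _) (hgh v)
  · exact mul_nonneg_of_nonpos_of_nonpos (hc v w hvw) (hgh' v w hvw)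

lemma Wz_of_nonneg {σ : Type*} (e : σ) {p : ℤ} (hp : 0 ≤ p) :
    Wz K e p = Wx K e ^ p.toNat :=
  if_pos hp

lemma Wz_of_nonpos {σ : Type*} (e : σ) {p : ℤ} (hp : p ≤ 0) :
    Wz K e p = Wy K e ^ (-p).toNat := by
  rcases hp.lt_or_eq with hp | rfl
  · exact if_neg hp.not_ge
  · simp [Wz]

lemma Wz_mul_Wz_of_mul_nonneg {σ : Type*} (e : σ) {a b : ℤ} (hab : 0 ≤ a * b) :
    Wz K e a * Wz K e b = Wz K e (a + b) := by
  rcases mul_nonneg_iff.mp hab with ⟨ha, hb⟩ | ⟨ha, hb⟩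
  · rw [Wz_of_nonneg e ha, Wz_of_nonneg e hb, Wz_of_nonneg e (add_nonneg ha hb),
      Int.toNat_add ha hb, pow_add]
  · rw [Wz_of_nonpos e ha, Wz_of_nonpos e hb, Wz_of_nonpos e (add_nonpos ha hb), neg_add,
      Int.toNat_add (neg_nonneg.mpr ha) (neg_nonneg.mpr hb), pow_add]

lemma Zpow_mul_Zpow {k l : E → ℤ} (hkl : ∀ e, 0 ≤ k e * l e) :
    Zpow K k * Zpow K l = Zpow K (k + l) := by
  refine (Finset.noncommProd_mul_distrib _ _ _ _
    fun a _ b _ hab => commute_Wz hab _ _).symm.trans ?_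
  exact Finset.noncommProd_congr rfl (fun e _ => Wz_mul_Wz_of_mul_nonneg e (hkl e)) _

theorem zpow_gammaT_mul {K V E : Type*} [Field K]
    [Fintype E] [DecidableEq E] [Fintype V]
    (γ : E → V → ℤ) (hM : CondM γ) (g h : V → ℤ)
    (hgh : ∀ i : V, 0 ≤ g i * h i)
    (hgh' : ∀ i j : V, i ≠ j → g i * h j ≤ 0) :
    Zpow K (fun e => ∑ v : V, γ e v * g v) * Zpow K (fun e => ∑ v : V, γ e v * h v) =
      Zpow K (fun e => ∑ v : V, γ e v * (g v + h v)) := by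
  have hsign : ∀ e, 0 ≤ (∑ v, γ e v * g v) * (∑ v, γ e v * h v) := fun e =>
    sum_mul_mul_sum_mul_nonneg (fun _ _ hvw => hM.mul_nonpos e hvw) hgh hgh'
  rw [Zpow_mul_Zpow hsign]
  congr 1
  funext e
  simp only [Pi.add_apply, mul_add, Finset.sum_add_distrib]
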